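/- Let 0 < σ < 1/2. The equation √(1−√λ)·(√λ+1−σ)²·tanh(ℓ√(1−√λ)) = √(1+√λ)·(√λ−1+σ)²·tanh(ℓ√(1+√λ)) admits exactly one solution λ in the interval ((1−σ)², 1). -/
import Mathlib


open Real

lemma my_tanh_lt {x y : ℝ} (h : x < y) : Real.tanh x < Real.tanh y := by
  rw [Real.tanh_eq_sinh_div_cosh, Real.tanh_eq_sinh_div_cosh,
    div_lt_div_iff₀ (Real.cosh_pos x) (Real.cosh_pos y)]
  have := Real.sinh_pos_iff.2 (sub_pos.2 h)
  rw [Real.sinh_sub] at this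
  nlinarith

lemma my_tanh_pos {x : ℝ} (h : 0 < x) : 0 < Real.tanh x := by
  simpa using my_tanh_lt h

lemma my_continuous_tanh : Continuous Real.tanh := by
  have : Real.tanh = fun x => Real.sinh x / Real.cosh x := by
    funext x; exact Real.tanh_eq_sinh_div_cosh x
  rw [this]
  exact Real.continuous_sinh.div Real.continuous_cosh (fun x => (Real.cosh_pos x).ne')

lemma g_lt {l : ℝ} (hl : 0 < l) {t1 t2 : ℝ} (h1 : 0 ≤ t1) (h : t1 < t2) :
    Real.sqrt t1 * Real.tanh (l * Real.sqrt t1) < Real.sqrt t2 * Real.tanh (l * Real.sqrt t2) := by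
  have hs : Real.sqrt t1 < Real.sqrt t2 := Real.sqrt_lt_sqrt h1 h
  have ht : Real.tanh (l * Real.sqrt t1) < Real.tanh (l * Real.sqrt t2) :=
    my_tanh_lt (by nlinarith)
  have h1' : (0:ℝ) ≤ Real.tanh (l * Real.sqrt t1) := by
    rcases eq_or_lt_of_le (mul_nonneg hl.le (Real.sqrt_nonneg t1)) with h|h
    · simp [← h]
    · exact (my_tanh_pos h).le
  exact mul_lt_mul'' hs ht (Real.sqrt_nonneg t1) h1'

lemma g_pos {l t : ℝ} (hl : 0 < l) (ht : 0 < t) :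
    0 < Real.sqrt t * Real.tanh (l * Real.sqrt t) := by
  have hs : 0 < Real.sqrt t := Real.sqrt_pos.2 ht
  exact mul_pos hs (my_tanh_pos (mul_pos hl hs))


lemma key_abstract {A1 A2 B1 B2 s1 s2 a : ℝ} (ha : 0 < a) (h1 : a < s1) (h12 : s1 < s2)
    (hA : A2 < A1) (hB : B1 < B2) (hB2pos : 0 < B2)
    (e1 : A1 * (s1 + a)^2 = B1 * (s1 - a)^2)
    (e2 : A2 * (s2 + a)^2 = B2 * (s2 - a)^2) : False := by
  have hs1a : 0 < s1 - a := by linarith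
  have hpos1 : 0 < (s2 + a)^2 * (s1 + a)^2 :=
    mul_pos (pow_pos (by linarith) 2) (pow_pos (by linarith) 2)
  have hpos2 : 0 < (s1 - a)^2 * (s2 + a)^2 :=
    mul_pos (pow_pos hs1a 2) (pow_pos (by linarith) 2)
  have c1 : A2 * ((s2 + a)^2 * (s1 + a)^2) < A1 * ((s2 + a)^2 * (s1 + a)^2) :=
    mul_lt_mul_of_pos_right hA hpos1
  have c2 : B1 * ((s1 - a)^2 * (s2 + a)^2) < B2 * ((s1 - a)^2 * (s2 + a)^2) :=
    mul_lt_mul_of_pos_right hB hpos2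
  have hlt : B2 * ((s2 - a)^2 * (s1 + a)^2) < B2 * ((s1 - a)^2 * (s2 + a)^2) := by
    calc B2 * ((s2 - a)^2 * (s1 + a)^2)
        = (B2 * (s2 - a)^2) * (s1 + a)^2 := by ring
      _ = (A2 * (s2 + a)^2) * (s1 + a)^2 := by rw [e2]
      _ = A2 * ((s2 + a)^2 * (s1 + a)^2) := by ring
      _ < A1 * ((s2 + a)^2 * (s1 + a)^2) := c1
      _ = (A1 * (s1 + a)^2) * (s2 + a)^2 := by ring
      _ = (B1 * (s1 - a)^2) * (s2 + a)^2 := by rw [e1]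
      _ = B1 * ((s1 - a)^2 * (s2 + a)^2) := by ring
      _ < B2 * ((s1 - a)^2 * (s2 + a)^2) := c2
  have hkey : (s2 - a)^2 * (s1 + a)^2 < (s1 - a)^2 * (s2 + a)^2 :=
    (mul_lt_mul_iff_right₀ hB2pos).mp hlt
  have hx : (s1 - a) * (s2 + a) < (s2 - a) * (s1 + a) := by nlinarith
  have hx2 : ((s1 - a) * (s2 + a))^2 < ((s2 - a) * (s1 + a))^2 :=
    pow_lt_pow_left₀ hx (by nlinarith) two_ne_zero
  rw [mul_pow, mul_pow] at hx2
  linarith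

lemma key_unique (l σ : ℝ) (hl : 0 < l) (hσ0 : 0 < σ) (hσ2 : σ < 1/2)
    {s1 s2 : ℝ} (h1 : 1 - σ < s1) (h12 : s1 < s2) (h2 : s2 < 1)
    (E1 : Real.sqrt (1 - s1) * (s1 + 1 - σ)^2 * Real.tanh (l * Real.sqrt (1 - s1)) =
      Real.sqrt (1 + s1) * (s1 - 1 + σ)^2 * Real.tanh (l * Real.sqrt (1 + s1)))
    (E2 : Real.sqrt (1 - s2) * (s2 + 1 - σ)^2 * Real.tanh (l * Real.sqrt (1 - s2)) =
      Real.sqrt (1 + s2) * (s2 - 1 + σ)^2 * Real.tanh (l * Real.sqrt (1 + s2))) : False := by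
  refine key_abstract (a := 1 - σ) (s1 := s1) (s2 := s2)
    (A1 := Real.sqrt (1 - s1) * Real.tanh (l * Real.sqrt (1 - s1)))
    (A2 := Real.sqrt (1 - s2) * Real.tanh (l * Real.sqrt (1 - s2)))
    (B1 := Real.sqrt (1 + s1) * Real.tanh (l * Real.sqrt (1 + s1)))
    (B2 := Real.sqrt (1 + s2) * Real.tanh (l * Real.sqrt (1 + s2)))
    (by linarith) h1 h12 ?_ ?_ ?_ ?_ ?_
  · exact g_lt hl (by linarith) (by linarith)
  · exact g_lt hl (by linarith) (by linarith)
  · exact g_pos hl (by linarith)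
  · linear_combination E1
  · linear_combination E2

/-- for `0 < σ < 1/2` and `ℓ > 0`, the transcendental equation
`√(1-√λ)(√λ+1-σ)² tanh(ℓ√(1-√λ)) = √(1+√λ)(√λ-1+σ)² tanh(ℓ√(1+√λ))`
has exactly one solution `λ` in `((1-σ)², 1)`. -/
theorem least_eigenvalue_equation_unique_solution (l σ : ℝ) (hl : 0 < l)
    (hσ : σ ∈ Set.Ioo (0 : ℝ) (1/2)) :
    ∃! lam : ℝ, lam ∈ Set.Ioo ((1 - σ)^2) 1 ∧
      Real.sqrt (1 - Real.sqrt lam) * (Real.sqrt lam + 1 - σ)^2 *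
        Real.tanh (l * Real.sqrt (1 - Real.sqrt lam)) =
      Real.sqrt (1 + Real.sqrt lam) * (Real.sqrt lam - 1 + σ)^2 *
        Real.tanh (l * Real.sqrt (1 + Real.sqrt lam)) := by
  obtain ⟨hσ0, hσ2⟩ := hσ
  set F : ℝ → ℝ := fun s => Real.sqrt (1 - s) * (s + 1 - σ)^2 * Real.tanh (l * Real.sqrt (1 - s))
    - Real.sqrt (1 + s) * (s - 1 + σ)^2 * Real.tanh (l * Real.sqrt (1 + s)) with hF
  have hc : Continuous F := by
    apply Continuous.sub
    · exact ((Real.continuous_sqrt.comp (continuous_const.sub continuous_id)).mul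
        (by continuity)).mul (my_continuous_tanh.comp
        (continuous_const.mul (Real.continuous_sqrt.comp (continuous_const.sub continuous_id))))
    · exact ((Real.continuous_sqrt.comp (continuous_const.add continuous_id)).mul
        (by continuity)).mul (my_continuous_tanh.comp
        (continuous_const.mul (Real.continuous_sqrt.comp (continuous_const.add continuous_id))))
  have hFa : 0 < F (1 - σ) := by
    have h1 : (1:ℝ) - (1 - σ) = σ := by ring
    have h2 : ((1:ℝ) - σ) - 1 + σ = 0 := by ring
    simp only [hF, h1, h2]
    have : (0:ℝ) < Real.sqrt σ * ((1 - σ) + 1 - σ)^2 * Real.tanh (l * Real.sqrt σ) := by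
      have hsp : 0 < Real.sqrt σ := Real.sqrt_pos.2 hσ0
      exact mul_pos (mul_pos hsp (pow_pos (by linarith) 2)) (my_tanh_pos (mul_pos hl hsp))
    simpa using this
  have hF1 : F 1 < 0 := by
    have h1 : (1:ℝ) - 1 = 0 := by ring
    simp only [hF, h1, Real.sqrt_zero]
    have : (0:ℝ) < Real.sqrt (1 + 1) * (1 - 1 + σ)^2 * Real.tanh (l * Real.sqrt (1 + 1)) := by
      have hsp : 0 < Real.sqrt (1 + 1 : ℝ) := Real.sqrt_pos.2 (by norm_num)
      exact mul_pos (mul_pos hsp (pow_pos (by linarith) 2)) (my_tanh_pos (mul_pos hl hsp))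
    simpa using this
  obtain ⟨s, hsmem, hFs⟩ := intermediate_value_Ioo' (le_of_lt (by linarith : (1:ℝ) - σ < 1))
    hc.continuousOn (Set.mem_Ioo.2 ⟨hF1, hFa⟩)
  obtain ⟨hs1, hs2⟩ := hsmem
  have hs0 : 0 < s := by linarith
  have hss : Real.sqrt (s^2) = s := Real.sqrt_sq hs0.le
  have Es : Real.sqrt (1 - s) * (s + 1 - σ)^2 * Real.tanh (l * Real.sqrt (1 - s)) =
      Real.sqrt (1 + s) * (s - 1 + σ)^2 * Real.tanh (l * Real.sqrt (1 + s)) := by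
    have := hFs
    simp only [hF] at this
    linarith
  refine ⟨s^2, ⟨⟨?_, ?_⟩, ?_⟩, ?_⟩
  · exact pow_lt_pow_left₀ hs1 (by linarith) two_ne_zero
  · nlinarith
  · rw [hss]; exact Es
  · rintro lam' ⟨⟨hl1, hl2⟩, heq⟩
    have hlam'0 : 0 ≤ lam' := le_trans (by positivity) hl1.le
    have ht1 : 1 - σ < Real.sqrt lam' := (Real.lt_sqrt (by linarith)).2 hl1
    have ht2 : Real.sqrt lam' < 1 := (Real.sqrt_lt' one_pos).2 (by linarith)
    rcases lt_trichotomy (Real.sqrt lam') s with h | h | h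
    · exact absurd (key_unique l σ hl hσ0 hσ2 ht1 h hs2 heq Es) id
    · rw [← hss, ← h, Real.sqrt_sq (Real.sqrt_nonneg lam'), Real.sq_sqrt hlam'0]
    · exact absurd (key_unique l σ hl hσ0 hσ2 hs1 h ht2 Es heq) id
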